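/- Let D be a nonempty type of documents, K a positive natural number, and model rankings as functions y : Fin K → D. Suppose two click models both satisfy the examination hypothesis with the SAME click prediction function c: for i ∈ {1,2} there are rᵢ : D → ℝ and oᵢ : (Fin K → D) → Fin K → ℝ with c(y)(k) = rᵢ(y(k)) * oᵢ(y)(k) for every ranking y and position k, where rᵢ(d) > 0 for all documents d and oᵢ(y)(k) > 0 for all rankings y and positions k. Assume moreover that for every pair of documents d₁, d₂ there exist rankings y₁, y₂ with y₁(0) = d₁, y₂(0) = d₂, y₁(k) = y₂(k) for all k ≠ 0, and oᵢ(y₁)(0) = oᵢ(y₂)(0) for both i = 1 and i = 2. Then the two relevance functions are proportional: there exists λ > 0 such that r₂(d) = λ * r₁(d) for every document d. -/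

import Mathlib

/-!
At the first position, two rankings `y₁, y₂` with equal examination factors give
`c y₁ / c y₂ = r (y₁ 0) / r (y₂ 0)` under either model, so both relevance functions have the
same ratios; fixing a reference document `d₀` yields the constant `r₂ d₀ / r₁ d₀`.
-/

theorem relevance_mul_click_eq_of_examination_eq {D ι : Type*} {c o : (ι → D) → ι → ℝ}
    {r : D → ℝ} (hEH : ∀ y k, c y k = r (y k) * o y k) {y₁ y₂ : ι → D} {k : ι}
    (ho : o y₁ k = o y₂ k) :
    r (y₁ k) * c y₂ k = r (y₂ k) * c y₁ k := by
  rw [hEH, hEH, ho]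
  ring

theorem exists_pos_eq_mul_of_mul_eq_mul {D : Type*} (d₀ : D) {f g : D → ℝ}
    (hf : 0 < f d₀) (hg : 0 < g d₀) (h : ∀ d, g d * f d₀ = g d₀ * f d) :
    ∃ lam : ℝ, 0 < lam ∧ ∀ d, g d = lam * f d := by
  refine ⟨g d₀ / f d₀, div_pos hg hf, fun d => ?_⟩
  rw [div_mul_eq_mul_div, eq_div_iff hf.ne', h]

theorem examination_hypothesis_relevance_unique_up_to_constant_general
    {D : Type*} [Nonempty D] {K : ℕ} (hK : 0 < K)
    (c : (Fin K → D) → Fin K → ℝ)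
    (r₁ r₂ : D → ℝ) (o₁ o₂ : (Fin K → D) → Fin K → ℝ)
    (hEH₁ : ∀ (y : Fin K → D) (k : Fin K), c y k = r₁ (y k) * o₁ y k)
    (hEH₂ : ∀ (y : Fin K → D) (k : Fin K), c y k = r₂ (y k) * o₂ y k)
    (hr₁ : ∀ d, 0 < r₁ d) (hr₂ : ∀ d, 0 < r₂ d)
    (ho₁ : ∀ (y : Fin K → D) (k : Fin K), 0 < o₁ y k)
    (hpair : ∀ d₁ d₂ : D, ∃ y₁ y₂ : Fin K → D,
      y₁ ⟨0, hK⟩ = d₁ ∧ y₂ ⟨0, hK⟩ = d₂ ∧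
      (∀ k : Fin K, k ≠ ⟨0, hK⟩ → y₁ k = y₂ k) ∧
      o₁ y₁ ⟨0, hK⟩ = o₁ y₂ ⟨0, hK⟩ ∧ o₂ y₁ ⟨0, hK⟩ = o₂ y₂ ⟨0, hK⟩) :
    ∃ lam : ℝ, 0 < lam ∧ ∀ d : D, r₂ d = lam * r₁ d := by
  obtain ⟨d₀⟩ := ‹Nonempty D›
  refine exists_pos_eq_mul_of_mul_eq_mul d₀ (hr₁ d₀) (hr₂ d₀) fun d => ?_
  obtain ⟨y₁, y₂, rfl, rfl, -, ho₁₂, ho₂₂⟩ := hpair d d₀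
  have h₁ := relevance_mul_click_eq_of_examination_eq hEH₁ ho₁₂
  have h₂ := relevance_mul_click_eq_of_examination_eq hEH₂ ho₂₂
  have hc : c y₂ ⟨0, hK⟩ ≠ 0 := by
    rw [hEH₁]
    exact mul_ne_zero (hr₁ _).ne' (ho₁ _ _).ne'
  refine mul_right_cancel₀ hc ?_
  linear_combination r₁ (y₂ ⟨0, hK⟩) * h₂ - r₂ (y₂ ⟨0, hK⟩) * h₁

/-- **Relevance scores are determined up to a positive constant.**
If two examination-hypothesis click models share the same click prediction
function `c`, with positive relevance scores and positive examination factors,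
and for every pair of documents there exist rankings differing only in the
first position with equal examination probabilities at the first position
(for both models), then the two relevance functions are proportional. -/
theorem examination_hypothesis_relevance_unique_up_to_constant
    {D : Type*} [Nonempty D] {K : ℕ} (hK : 0 < K)
    (c : (Fin K → D) → Fin K → ℝ)
    (r₁ r₂ : D → ℝ) (o₁ o₂ : (Fin K → D) → Fin K → ℝ)
    (hEH₁ : ∀ (y : Fin K → D) (k : Fin K), c y k = r₁ (y k) * o₁ y k)
    (hEH₂ : ∀ (y : Fin K → D) (k : Fin K), c y k = r₂ (y k) * o₂ y k)
    (hr₁ : ∀ d, 0 < r₁ d) (hr₂ : ∀ d, 0 < r₂ d)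
    (ho₁ : ∀ (y : Fin K → D) (k : Fin K), 0 < o₁ y k)
    (ho₂ : ∀ (y : Fin K → D) (k : Fin K), 0 < o₂ y k)
    (hpair : ∀ d₁ d₂ : D, ∃ y₁ y₂ : Fin K → D,
      y₁ ⟨0, hK⟩ = d₁ ∧ y₂ ⟨0, hK⟩ = d₂ ∧
      (∀ k : Fin K, k ≠ ⟨0, hK⟩ → y₁ k = y₂ k) ∧
      o₁ y₁ ⟨0, hK⟩ = o₁ y₂ ⟨0, hK⟩ ∧ o₂ y₁ ⟨0, hK⟩ = o₂ y₂ ⟨0, hK⟩) :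
    ∃ lam : ℝ, 0 < lam ∧ ∀ d : D, r₂ d = lam * r₁ d :=
  examination_hypothesis_relevance_unique_up_to_constant_general hK c r₁ r₂ o₁ o₂ hEH₁ hEH₂ hr₁ hr₂
    ho₁ hpair
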